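/- Let H be a real separable Hilbert space and let B, C be bounded self-adjoint linear operators on H with B∘C = C∘B. For t ∈ ℝ set ch(t) = ∑_{n=0}^∞ t^{2n}(C∘B)ⁿ/(2n)! and sh(t) = ∑_{n=0}^∞ t^{2n+1}(C∘B)ⁿ/(2n+1)!, assume ch(t) is invertible for every t, and define P(t) = C ∘ sh(t) ∘ ch(t)⁻¹ and R(t) = ch(t)⁻¹. Then P(0) = 0 and t ↦ P(t) is differentiable with P'(t) = R(t)* ∘ C ∘ R(t) for all t, where R(t)* denotes the Hilbert-space adjoint of R(t). -/

import Mathlib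

/-!
With `A = C B`, self-adjoint because `B` and `C` commute, `ch t` and `sh t` are `cosh (t √A)` and
`sinh (t √A) / √A`. Termwise differentiation gives `sh' = ch` and `ch' = A sh`, so `ch² - A sh²`
has zero derivative and is identically `1`. Since everything commutes with `A`,
`(sh ch⁻¹)' = 1 - A sh² ch⁻² = ch⁻²`; and `ch⁻¹` is self-adjoint, so `P' = C ch⁻² = R* C R`.
-/

open scoped Nat Ring
open Metric

lemma norm_pow_le_max_norm_one_mul {R : Type*} [NormedRing R] (a : R) (n : ℕ) :
    ‖a ^ n‖ ≤ max ‖(1 : R)‖ 1 * ‖a‖ ^ n := by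
  rcases n.eq_zero_or_pos with rfl | hn
  · simp
  · exact (norm_pow_le' a hn).trans (le_mul_of_one_le_left (by positivity) (le_max_right _ _))

lemma hasDerivAt_pow_succ_div_factorial (m : ℕ) (y : ℝ) :
    HasDerivAt (fun s : ℝ => s ^ (m + 1) / ((m + 1)! : ℝ)) (y ^ m / (m ! : ℝ)) y := by
  refine ((hasDerivAt_pow (m + 1) y).div_const ((m + 1)! : ℝ)).congr_deriv ?_
  rw [Nat.factorial_succ]
  push_cast
  field_simp

lemma HasDerivAt.ringInverse {𝕜 R : Type*} [NontriviallyNormedField 𝕜] [NormedRing R]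
    [HasSummableGeomSeries R] [NormedAlgebra 𝕜 R] {f : 𝕜 → R} {f' : R} {t : 𝕜}
    (hf : HasDerivAt f f' t) (ht : IsUnit (f t)) :
    HasDerivAt (fun s => (f s)⁻¹ʳ) (-((f t)⁻¹ʳ * f' * (f t)⁻¹ʳ)) t := by
  obtain ⟨u, hu⟩ := ht
  have hinv : (↑u⁻¹ : R) = (f t)⁻¹ʳ := by rw [← hu, Ring.inverse_unit]
  have h := hasFDerivAt_ringInverse (𝕜 := 𝕜) u
  rw [hu, hinv] at h
  exact (h.comp_hasDerivAt t hf).congr_deriv (by simp)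

lemma Commute.ringInverse_right {M₀ : Type*} [MonoidWithZero M₀] {a b : M₀}
    (h : Commute a b) : Commute a b⁻¹ʳ := by
  by_cases hb : IsUnit b
  · obtain ⟨u, rfl⟩ := hb
    rw [Ring.inverse_unit]
    exact h.units_inv_right
  · rw [Ring.inverse_non_unit _ hb]
    exact Commute.zero_right a

lemma mul_ringInverse_add_mul_neg_eq_ringInverse_sq {R : Type*} [Ring R] {a c s : R}
    (hc : IsUnit c) (hac : Commute a c) (has : Commute a s) (hcs : Commute c s)
    (h : c * c - a * (s * s) = 1) :
    c * c⁻¹ʳ + s * -(c⁻¹ʳ * (a * s) * c⁻¹ʳ) = c⁻¹ʳ ^ 2 := by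
  have hasi : Commute (a * s) c⁻¹ʳ := hac.ringInverse_right.mul_left hcs.symm.ringInverse_right
  calc _ = 1 - a * (s * s) * (c⁻¹ʳ * c⁻¹ʳ) := by
        rw [Ring.mul_inverse_cancel c hc, mul_neg, ← sub_eq_add_neg, ← hasi.eq,
          mul_assoc (a * s), ← mul_assoc s, ← mul_assoc s a, ← has.eq, mul_assoc a s s]
    _ = (c * c - a * (s * s)) * (c⁻¹ʳ * c⁻¹ʳ) := by
        rw [sub_mul, mul_assoc c, ← mul_assoc c c⁻¹ʳ, Ring.mul_inverse_cancel c hc, one_mul,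
          Ring.mul_inverse_cancel c hc]
    _ = _ := by rw [h, one_mul, sq]

section CoshPrimitive

variable {𝔸 : Type*} [NormedRing 𝔸] [NormedAlgebra ℝ 𝔸]

lemma norm_coshPrimitive_term_le (A : 𝔸) (d n : ℕ) {r y : ℝ} (hr : 1 ≤ r) (hy : |y| ≤ r) :
    ‖(y ^ (2 * n + d) / ((2 * n + d)! : ℝ)) • A ^ n‖ ≤
      max ‖(1 : 𝔸)‖ 1 * r ^ d * ((r ^ 2 * ‖A‖) ^ n / n !) := by
  calc _ = |y| ^ (2 * n + d) / ((2 * n + d)! : ℝ) * ‖A ^ n‖ := by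
        rw [norm_smul, Real.norm_eq_abs, abs_div, abs_pow, Nat.abs_cast]
    _ ≤ r ^ (2 * n + d) / (n ! : ℝ) * (max ‖(1 : 𝔸)‖ 1 * ‖A‖ ^ n) := by
        gcongr
        · omega
        · exact norm_pow_le_max_norm_one_mul A n
    _ = _ := by ring

/-- The `d`-th iterated primitive of `t ↦ cosh (t √A)` vanishing at `0`; `d = 0, 1` give the
paper's `ch` and `sh`. -/
noncomputable def coshPrimitive (A : 𝔸) (d : ℕ) (t : ℝ) : 𝔸 :=
  ∑' n : ℕ, (t ^ (2 * n + d) / ((2 * n + d)! : ℝ)) • A ^ n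

lemma coshPrimitive_succ_apply_zero (A : 𝔸) (d : ℕ) : coshPrimitive A (d + 1) 0 = 0 := by
  simp [coshPrimitive]

lemma Commute.coshPrimitive_right {X A : 𝔸} (h : Commute X A) (d : ℕ) (t : ℝ) :
    Commute X (coshPrimitive A d t) :=
  .tsum_right X fun n => (h.pow_right n).smul_right _

lemma IsSelfAdjoint.coshPrimitive [StarRing 𝔸] [StarModule ℝ 𝔸] [ContinuousStar 𝔸] {A : 𝔸}
    (hA : IsSelfAdjoint A) (d : ℕ) (t : ℝ) : IsSelfAdjoint (coshPrimitive A d t) := by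
  rw [isSelfAdjoint_iff, _root_.coshPrimitive, tsum_star]
  simp_rw [star_smul, star_pow, hA.star_eq, star_trivial]

variable [CompleteSpace 𝔸]

lemma summable_coshPrimitive_term (A : 𝔸) (d : ℕ) (t : ℝ) :
    Summable fun n : ℕ => (t ^ (2 * n + d) / ((2 * n + d)! : ℝ)) • A ^ n :=
  .of_norm_bounded ((Real.summable_pow_div_factorial _).mul_left _) fun n =>
    norm_coshPrimitive_term_le A d n (le_add_of_nonneg_left (abs_nonneg t))
      (le_add_of_nonneg_right zero_le_one)

lemma hasDerivAt_coshPrimitive_succ (A : 𝔸) (d : ℕ) (t : ℝ) :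
    HasDerivAt (coshPrimitive A (d + 1)) (coshPrimitive A d t) t := by
  have hr : 1 ≤ |t| + 1 := le_add_of_nonneg_left (abs_nonneg t)
  have ht : t ∈ ball (0 : ℝ) (|t| + 1) := by simp
  exact hasDerivAt_tsum_of_isPreconnected
    (g := fun n s => (s ^ (2 * n + d + 1) / ((2 * n + d + 1)! : ℝ)) • A ^ n)
    (g' := fun n s => (s ^ (2 * n + d) / ((2 * n + d)! : ℝ)) • A ^ n)
    ((Real.summable_pow_div_factorial _).mul_left _) isOpen_ball
    (convex_ball _ _).isPreconnected
    (fun n y _ => (hasDerivAt_pow_succ_div_factorial (2 * n + d) y).smul_const (A ^ n))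
    (fun n y hy => norm_coshPrimitive_term_le A d n hr (mem_ball_zero_iff.mp hy).le) ht
    (summable_coshPrimitive_term A (d + 1) t) ht

lemma coshPrimitive_zero_eq (A : 𝔸) (t : ℝ) :
    coshPrimitive A 0 t = 1 + A * coshPrimitive A 2 t := by
  rw [coshPrimitive, (summable_coshPrimitive_term A 0 t).tsum_eq_zero_add, coshPrimitive,
    ← (summable_coshPrimitive_term A 2 t).tsum_mul_left]
  simp [← pow_succ', mul_add]

lemma hasDerivAt_coshPrimitive_zero (A : 𝔸) (t : ℝ) :
    HasDerivAt (coshPrimitive A 0) (A * coshPrimitive A 1 t) t := by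
  have h : coshPrimitive A 0 = fun s => 1 + A * coshPrimitive A 2 s :=
    funext (coshPrimitive_zero_eq A)
  rw [h]
  exact ((hasDerivAt_coshPrimitive_succ A 1 t).const_mul A).const_add 1

lemma coshPrimitive_zero_apply_zero (A : 𝔸) : coshPrimitive A 0 0 = 1 := by
  simp [coshPrimitive_zero_eq, coshPrimitive_succ_apply_zero]

lemma coshPrimitive_zero_mul_self_sub (A : 𝔸) (t : ℝ) :
    coshPrimitive A 0 t * coshPrimitive A 0 t -
      A * (coshPrimitive A 1 t * coshPrimitive A 1 t) = 1 := by
  have hF : ∀ s, HasDerivAt (fun s => coshPrimitive A 0 s * coshPrimitive A 0 s -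
      A * (coshPrimitive A 1 s * coshPrimitive A 1 s)) 0 s := by
    intro s
    have hc := hasDerivAt_coshPrimitive_zero A s
    have hs := hasDerivAt_coshPrimitive_succ A 0 s
    refine ((hc.mul hc).sub ((hs.mul hs).const_mul A)).congr_deriv ?_
    have hAc := (Commute.refl A).coshPrimitive_right 0 s
    have hsc := hAc.symm.coshPrimitive_right 1 s
    rw [← mul_assoc (coshPrimitive A 0 s), ← hAc.eq, mul_assoc, mul_assoc A, hsc.eq, mul_add]
    abel
  simpa [coshPrimitive_zero_apply_zero, coshPrimitive_succ_apply_zero] using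
    is_const_of_deriv_eq_zero (fun s => (hF s).differentiableAt) (fun s => (hF s).deriv) t 0

lemma hasDerivAt_coshPrimitive_one_mul_ringInverse (A : 𝔸) {t : ℝ}
    (ht : IsUnit (coshPrimitive A 0 t)) :
    HasDerivAt (fun s => coshPrimitive A 1 s * (coshPrimitive A 0 s)⁻¹ʳ)
      ((coshPrimitive A 0 t)⁻¹ʳ ^ 2) t := by
  have hAc := (Commute.refl A).coshPrimitive_right 0 t
  refine ((hasDerivAt_coshPrimitive_succ A 0 t).mul
    ((hasDerivAt_coshPrimitive_zero A t).ringInverse ht)).congr_deriv ?_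
  exact mul_ringInverse_add_mul_neg_eq_ringInverse_sq ht hAc
    ((Commute.refl A).coshPrimitive_right 1 t) (hAc.symm.coshPrimitive_right 1 t)
    (coshPrimitive_zero_mul_self_sub A t)

end CoshPrimitive

theorem mehler_solution_P_component_general
    {H : Type*} [NormedAddCommGroup H] [InnerProductSpace ℝ H] [CompleteSpace H]
    (B C : H →L[ℝ] H) (hBsa : IsSelfAdjoint B) (hCsa : IsSelfAdjoint C)
    (hBC : B ∘L C = C ∘L B)
    (ch sh : ℝ → (H →L[ℝ] H))
    (hch : ch = fun t : ℝ =>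
      ∑' n : ℕ, (t ^ (2 * n) / (Nat.factorial (2 * n) : ℝ)) • (C ∘L B) ^ n)
    (hsh : sh = fun t : ℝ =>
      ∑' n : ℕ, (t ^ (2 * n + 1) / (Nat.factorial (2 * n + 1) : ℝ)) • (C ∘L B) ^ n)
    (hunit : ∀ t : ℝ, IsUnit (ch t))
    (P R : ℝ → (H →L[ℝ] H))
    (hP : P = fun t : ℝ => C ∘L sh t ∘L Ring.inverse (ch t))
    (hR : R = fun t : ℝ => Ring.inverse (ch t)) :
    P 0 = 0 ∧
    ∀ t : ℝ, HasDerivAt P (ContinuousLinearMap.adjoint (R t) ∘L C ∘L R t) t := by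
  have hch : ch = coshPrimitive (C * B) 0 := hch
  have hsh : sh = coshPrimitive (C * B) 1 := hsh
  have hCB : IsSelfAdjoint (C * B) := (hCsa.commute_iff hBsa).mp hBC.symm
  have hC_CB : Commute C (C * B) := (Commute.refl C).mul_right hBC.symm
  subst hP hR hch hsh
  refine ⟨by simp [coshPrimitive_succ_apply_zero], fun t => ?_⟩
  have hRsa : IsSelfAdjoint (coshPrimitive (C * B) 0 t)⁻¹ʳ :=
    (hCB.coshPrimitive 0 t).ringInverse
  have hCR : Commute C (coshPrimitive (C * B) 0 t)⁻¹ʳ :=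
    (hC_CB.coshPrimitive_right 0 t).ringInverse_right
  rw [← ContinuousLinearMap.star_eq_adjoint, hRsa.star_eq]
  refine ((hasDerivAt_coshPrimitive_one_mul_ringInverse (C * B) (hunit t)).const_mul
    C).congr_deriv ?_
  change C * _ = _ * (C * _)
  rw [← mul_assoc, ← hCR.eq, mul_assoc, sq]

/-- **P-component of Theorem 4 of the paper (D = 0).**
On a real separable Hilbert space, for commuting bounded *self-adjoint* operators `B`, `C`,
with `ch(t) = ∑ t^{2n}(CB)ⁿ/(2n)!`, `sh(t) = ∑ t^{2n+1}(CB)ⁿ/(2n+1)!` and `ch(t)`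
invertible for all `t`, the functions `P(t) = C ∘ sh(t) ∘ ch(t)⁻¹` and `R(t) = ch(t)⁻¹`
satisfy `P(0) = 0` and `P'(t) = R(t)* ∘ C ∘ R(t)`. -/
theorem mehler_solution_P_component
    {H : Type*} [NormedAddCommGroup H] [InnerProductSpace ℝ H] [CompleteSpace H]
    [TopologicalSpace.SeparableSpace H]
    (B C : H →L[ℝ] H) (hBsa : IsSelfAdjoint B) (hCsa : IsSelfAdjoint C)
    (hBC : B ∘L C = C ∘L B)
    (ch sh : ℝ → (H →L[ℝ] H))
    (hch : ch = fun t : ℝ =>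
      ∑' n : ℕ, (t ^ (2 * n) / (Nat.factorial (2 * n) : ℝ)) • (C ∘L B) ^ n)
    (hsh : sh = fun t : ℝ =>
      ∑' n : ℕ, (t ^ (2 * n + 1) / (Nat.factorial (2 * n + 1) : ℝ)) • (C ∘L B) ^ n)
    (hunit : ∀ t : ℝ, IsUnit (ch t))
    (P R : ℝ → (H →L[ℝ] H))
    (hP : P = fun t : ℝ => C ∘L sh t ∘L Ring.inverse (ch t))
    (hR : R = fun t : ℝ => Ring.inverse (ch t)) :
    P 0 = 0 ∧
    ∀ t : ℝ, HasDerivAt P (ContinuousLinearMap.adjoint (R t) ∘L C ∘L R t) t :=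
  mehler_solution_P_component_general B C hBsa hCsa hBC ch sh hch hsh hunit P R hP hR
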